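/- Suppose h is convex. Then there exists δ > 0 such that for every (a,b) ∈ ℝⁿ×ℝⁿ the following statements are equivalent: (i) ∇F(a,b) = 0 and λ_min(∇²F(a,b)) > −δ (i.e., D²F(a,b)[(u,v),(u,v)] > −δ‖(u,v)‖² for every nonzero (u,v) ∈ ℝⁿ×ℝⁿ); (ii) the point a² − b² is a global minimizer of f and min{aᵢ², bᵢ²} = 0 for every i; (iii) (a,b) is a global minimizer of F; (iv) (a,b) is a second-order stationary point of F, i.e., ∇F(a,b) = 0 and ∇²F(a,b) is positive semidefinite. -/

import Mathlib

/-!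
Write `x = a² - b²` and `g = ∇h(x)`. Since `|aᵢ² - bᵢ²| ≤ aᵢ² + bᵢ²`, with equality iff
`min(aᵢ², bᵢ²) = 0`, and every `x` arises from a pair with equality, `F ≥ f(a² - b²)` and
`inf F = inf f`: this is (ii) ⇔ (iii), and (iii) ⇒ (iv) is the second-order necessary condition.

The partial derivatives of `F` are `2aᵢ(gᵢ + μ)` and `2bᵢ(μ - gᵢ)`. Hence at a critical point
`min(aᵢ², bᵢ²) = 0` and `gᵢ = -μ sign xᵢ` wherever `xᵢ ≠ 0`, while where `aᵢ = bᵢ = 0` the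
Hessian of `F` along `(eᵢ, 0)` and `(0, eᵢ)` is `2(μ + gᵢ)` and `2(μ - gᵢ)`. So a second-order
stationary point satisfies `|gᵢ| ≤ μ` for all `i`, the optimality condition of the convex
problem `min f`: (iv) ⇒ (ii).

For (i) ⇒ (ii) the point is that `δ` can be chosen uniformly. Two points `x, y` satisfying
`gᵢ = -μ sign xᵢ` on their supports and having the same sign pattern satisfy
`∇h(x)(y - x) = ∇h(y)(y - x)`, which for convex `h` forces `∇h(x) = ∇h(y)`. So only finitely
many values `|gᵢ|` occur at such points, and any `δ` below the gaps between `μ` and the values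
above `μ` turns `λ_min(∇²F) > -δ` into `|gᵢ| ≤ μ`.
-/

open Set Filter Topology

section Convex

variable {E : Type*} [NormedAddCommGroup E] [NormedSpace ℝ E] {h : E → ℝ}

theorem ConvexOn.add_fderiv_sub_le (hconv : ConvexOn ℝ univ h) {x : E}
    (hx : DifferentiableAt ℝ h x) (y : E) : h x + fderiv ℝ h x (y - x) ≤ h y := by
  have hφ : ConvexOn ℝ univ (h ∘ AffineMap.lineMap (k := ℝ) x y) := by
    simpa using hconv.comp_affineMap (AffineMap.lineMap (k := ℝ) x y)
  have hφ' : HasDerivAt (h ∘ AffineMap.lineMap (k := ℝ) x y) (fderiv ℝ h x (y - x)) 0 :=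
    hx.hasFDerivAt.comp_hasDerivAt_of_eq 0 AffineMap.hasDerivAt_lineMap (by simp)
  have := hφ.le_slope_of_hasDerivAt (mem_univ 0) (mem_univ 1) one_pos hφ'
  simp only [slope_def_field, Function.comp_apply, AffineMap.lineMap_apply_zero,
    AffineMap.lineMap_apply_one, sub_zero, div_one] at this
  linarith

/-- `y` minimizes `h - fderiv ℝ h x`, by the gradient inequality at `x`. -/
theorem ConvexOn.fderiv_eq_of_add_fderiv_sub_eq (hconv : ConvexOn ℝ univ h) {x y : E}
    (hx : DifferentiableAt ℝ h x) (hy : DifferentiableAt ℝ h y)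
    (hxy : h y = h x + fderiv ℝ h x (y - x)) : fderiv ℝ h y = fderiv ℝ h x := by
  have hmin : IsLocalMin (fun z => h z - fderiv ℝ h x z) y :=
    Eventually.of_forall fun z => by
      have := hconv.add_fderiv_sub_le hx z
      simp only [map_sub] at this hxy
      linarith
  have := hmin.hasFDerivAt_eq_zero (hy.hasFDerivAt.sub (fderiv ℝ h x).hasFDerivAt)
  exact sub_eq_zero.mp this

theorem ConvexOn.fderiv_eq_of_fderiv_apply_sub_eq (hconv : ConvexOn ℝ univ h) {x y : E}
    (hx : DifferentiableAt ℝ h x) (hy : DifferentiableAt ℝ h y)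
    (hxy : fderiv ℝ h x (y - x) = fderiv ℝ h y (y - x)) : fderiv ℝ h x = fderiv ℝ h y := by
  have h₁ := hconv.add_fderiv_sub_le hx y
  have h₂ := hconv.add_fderiv_sub_le hy x
  rw [← neg_sub, map_neg, ← hxy] at h₂
  exact (hconv.fderiv_eq_of_add_fderiv_sub_eq hx hy (by linarith)).symm

end Convex

theorem hasDerivAt_add_smul_add_sq_smul {V : Type*} [NormedAddCommGroup V] [NormedSpace ℝ V]
    (x d c : V) : HasDerivAt (fun t : ℝ => x + t • d + t ^ 2 • c) d 0 := by
  have hsq : HasDerivAt (fun t : ℝ => t ^ 2) 0 0 := by simpa using hasDerivAt_pow 2 (0 : ℝ)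
  simpa only [add_assoc, one_smul, zero_smul, add_zero] using
    (((hasDerivAt_id' (0 : ℝ)).smul_const d).fun_add (hsq.smul_const c)).const_add x

theorem IsLocalMin.nonneg_of_hasDerivAt_deriv {φ φ' : ℝ → ℝ} {a c : ℝ} (hmin : IsLocalMin φ a)
    (hφ : ∀ t, HasDerivAt φ (φ' t) t) (hφ' : HasDerivAt φ' c a) : 0 ≤ c := by
  by_contra! hc
  have h0 : φ' a = 0 := hmin.hasDerivAt_eq_zero (hφ a)
  have hneg : ∀ᶠ t in 𝓝[>] a, φ' t < 0 := by
    have hslope := (hasDerivAt_iff_tendsto_slope.mp hφ').eventually_lt_const hc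
    filter_upwards [nhdsGT_le_nhdsNE a hslope, self_mem_nhdsWithin] with t ht (hat : a < t)
    rw [slope_def_field, h0, sub_zero, div_neg_iff] at ht
    rcases ht with ⟨-, ht⟩ | ⟨ht, -⟩ <;> linarith
  obtain ⟨u, hu : a < u, hsub⟩ :=
    mem_nhdsGT_iff_exists_Ioo_subset.mp (hneg.and (nhdsWithin_le_nhds hmin))
  have hau : a < (a + u) / 2 := by linarith
  obtain ⟨ξ, hξ, hmvt⟩ := exists_hasDerivAt_eq_slope φ φ' hau
    (fun t _ => (hφ t).continuousAt.continuousWithinAt) fun t _ => hφ t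
  have hφξ : φ' ξ < 0 := (hsub ⟨hξ.1, by linarith [hξ.2]⟩).1
  have hφu : φ a ≤ φ ((a + u) / 2) := (hsub ⟨hau, by linarith⟩).2
  rw [hmvt] at hφξ
  exact (div_nonneg (sub_nonneg.mpr hφu) (sub_pos.mpr hau).le).not_gt hφξ

section SecondOrder

variable {Z : Type*} [NormedAddCommGroup Z] [NormedSpace ℝ Z] {G : Z → ℝ}

theorem ContDiff.hasLineDerivAt_fderiv_apply (hG : ContDiff ℝ 2 G) (p w : Z) :
    HasLineDerivAt ℝ (fun q => fderiv ℝ G q w) (iteratedFDeriv ℝ 2 G p (fun _ => w)) p w := by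
  have hG' : Differentiable ℝ (fderiv ℝ G) :=
    (hG.fderiv_right (m := 1) le_rfl).differentiable one_ne_zero
  rw [iteratedFDeriv_two_apply]
  exact ((hG' p).hasFDerivAt.clm_apply (hasFDerivAt_const w p)).hasLineDerivAt w |>.congr_deriv
    (by simp)

theorem IsLocalMin.iteratedFDeriv_two_nonneg (hG : ContDiff ℝ 2 G) {p : Z} (hmin : IsLocalMin G p)
    (w : Z) : 0 ≤ iteratedFDeriv ℝ 2 G p (fun _ => w) := by
  have hline : IsLocalMin (fun t : ℝ => G (p + t • w)) 0 :=
    IsLocalMin.comp_continuous (g := fun t : ℝ => p + t • w) (by simpa using hmin) (by fun_prop)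
  have hdiff : Differentiable ℝ G := hG.differentiable two_ne_zero
  exact hline.nonneg_of_hasDerivAt_deriv
    (fun t => (hdiff _).hasFDerivAt.comp_hasDerivAt t
      (((hasDerivAt_id t).smul_const w).const_add p |>.congr_deriv (one_smul ℝ w)))
    (hG.hasLineDerivAt_fderiv_apply p w)

end SecondOrder

theorem Set.Finite.exists_pos_add_le_of_lt {S : Set ℝ} (hS : S.Finite) (μ : ℝ) :
    ∃ δ > 0, ∀ s ∈ S, μ < s → μ + δ ≤ s := by
  have hμ : (S ∩ Ioi μ)ᶜ ∈ 𝓝 μ :=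
    (hS.inter_of_left _).isClosed.isOpen_compl.mem_nhds fun h => lt_irrefl μ h.2
  obtain ⟨δ, hδ, hball⟩ := Metric.mem_nhds_iff.mp hμ
  refine ⟨δ, hδ, fun s hs hμs => ?_⟩
  by_contra! hlt
  exact hball (by rw [Metric.mem_ball, Real.dist_eq, abs_of_pos (sub_pos.mpr hμs)]; linarith)
    ⟨hs, hμs⟩

theorem EuclideanSpace.clm_apply_eq_sum {ι : Type*} [Fintype ι] [DecidableEq ι]
    (L : EuclideanSpace ℝ ι →L[ℝ] ℝ) (z : EuclideanSpace ℝ ι) :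
    L z = ∑ i, z i * L (EuclideanSpace.single i 1) := by
  conv_lhs => rw [← (EuclideanSpace.basisFun ι ℝ).sum_repr z]
  simp

section L1

variable {ι : Type*} [Fintype ι] [DecidableEq ι]

def l1Objective (h : EuclideanSpace ℝ ι → ℝ) (μ : ℝ) (x : EuclideanSpace ℝ ι) : ℝ :=
  h x + μ * ∑ i, |x i|

/-- The subgradient optimality condition `-∇h(x) ∈ μ ∂‖·‖₁(x)` of `l1Objective h μ`, on the
support of `x` only. -/
def IsSignStationary (h : EuclideanSpace ℝ ι → ℝ) (μ : ℝ) (x : EuclideanSpace ℝ ι) : Prop :=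
  ∀ i, x i ≠ 0 → fderiv ℝ h x (EuclideanSpace.single i 1) = -(μ * SignType.sign (x i))

variable {h : EuclideanSpace ℝ ι → ℝ} {μ : ℝ}

theorem l1Objective_le_of_isSignStationary (hconv : ConvexOn ℝ univ h) {x : EuclideanSpace ℝ ι}
    (hx : DifferentiableAt ℝ h x) (hμ : 0 ≤ μ) (hstat : IsSignStationary h μ x)
    (hbound : ∀ i, x i = 0 → |fderiv ℝ h x (EuclideanSpace.single i 1)| ≤ μ)
    (y : EuclideanSpace ℝ ι) : l1Objective h μ x ≤ l1Objective h μ y := by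
  set g := fun i => fderiv ℝ h x (EuclideanSpace.single i 1)
  have hg : ∀ i, |g i| ≤ μ ∧ g i * x i = -(μ * |x i|) := by
    intro i
    by_cases hxi : x i = 0
    · simpa [hxi] using hbound i hxi
    · rcases lt_or_gt_of_ne hxi with hneg | hpos
      · simp [g, hstat i hxi, hneg, abs_of_neg hneg, abs_of_nonneg hμ]
      · simp [g, hstat i hxi, hpos, abs_of_pos hpos, abs_of_nonneg hμ]
  have hterm : ∀ i, μ * |x i| - μ * |y i| ≤ (y i - x i) * g i := fun i => by
    have := neg_abs_le (g i * y i)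
    rw [abs_mul] at this
    nlinarith [(hg i).1, (hg i).2, abs_nonneg (y i)]
  have hgrad := hconv.add_fderiv_sub_le hx y
  rw [EuclideanSpace.clm_apply_eq_sum] at hgrad
  have hsum := Finset.sum_le_sum fun i (_ : i ∈ Finset.univ) => hterm i
  simp only [Finset.sum_sub_distrib, ← Finset.mul_sum] at hsum
  simp only [WithLp.ofLp_sub, Pi.sub_apply] at hgrad
  unfold l1Objective
  linarith

theorem fderiv_eq_of_isSignStationary (hconv : ConvexOn ℝ univ h) (hd : Differentiable ℝ h)
    {x y : EuclideanSpace ℝ ι} (hx : IsSignStationary h μ x) (hy : IsSignStationary h μ y)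
    (hsign : ∀ i, SignType.sign (x i) = SignType.sign (y i)) : fderiv ℝ h x = fderiv ℝ h y := by
  refine hconv.fderiv_eq_of_fderiv_apply_sub_eq (hd x) (hd y) ?_
  rw [EuclideanSpace.clm_apply_eq_sum, EuclideanSpace.clm_apply_eq_sum]
  refine Finset.sum_congr rfl fun i _ => ?_
  by_cases hxi : x i = 0
  · have hyi : y i = 0 := by rwa [← sign_eq_zero_iff, ← hsign i, sign_eq_zero_iff]
    simp [hxi, hyi]
  · have hyi : y i ≠ 0 := by rwa [← sign_ne_zero, ← hsign i, sign_ne_zero]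
    rw [hx i hxi, hy i hyi, hsign i]

theorem finite_fderiv_image_isSignStationary (hconv : ConvexOn ℝ univ h)
    (hd : Differentiable ℝ h) : (fderiv ℝ h '' {x | IsSignStationary h μ x}).Finite := by
  let pattern (σ : ι → SignType) :=
    {x : EuclideanSpace ℝ ι | IsSignStationary h μ x ∧ ∀ i, SignType.sign (x i) = σ i}
  have hconst σ : (fderiv ℝ h '' pattern σ).Subsingleton := by
    rintro _ ⟨x, ⟨hx, hxσ⟩, rfl⟩ _ ⟨y, ⟨hy, hyσ⟩, rfl⟩
    exact fderiv_eq_of_isSignStationary hconv hd hx hy fun i => (hxσ i).trans (hyσ i).symm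
  refine (finite_iUnion fun σ => (hconst σ).finite).subset ?_
  rintro _ ⟨x, hx, rfl⟩
  exact mem_iUnion.mpr ⟨fun i => SignType.sign (x i), x, ⟨hx, fun i => rfl⟩, rfl⟩

theorem exists_pos_gap_isSignStationary (hconv : ConvexOn ℝ univ h) (hd : Differentiable ℝ h)
    (μ : ℝ) : ∃ δ > 0, ∀ x, IsSignStationary h μ x → ∀ i,
      μ < |fderiv ℝ h x (EuclideanSpace.single i 1)| →
        μ + δ ≤ |fderiv ℝ h x (EuclideanSpace.single i 1)| := by
  have hfin := finite_iUnion fun i : ι =>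
    (finite_fderiv_image_isSignStationary (μ := μ) hconv hd).image
      fun L => |L (EuclideanSpace.single i 1)|
  obtain ⟨δ, hδ, hgap⟩ := hfin.exists_pos_add_le_of_lt μ
  exact ⟨δ, hδ, fun x hx i => hgap _ (mem_iUnion.mpr ⟨i, _, ⟨x, hx, rfl⟩, rfl⟩)⟩

end L1

section HDP

variable {ι : Type*}

def sqDiff (p : EuclideanSpace ℝ ι × EuclideanSpace ℝ ι) : EuclideanSpace ℝ ι :=
  WithLp.toLp 2 fun i => p.1 i ^ 2 - p.2 i ^ 2

def sqDiffDeriv (p w : EuclideanSpace ℝ ι × EuclideanSpace ℝ ι) : EuclideanSpace ℝ ι :=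
  WithLp.toLp 2 fun i => 2 * (p.1 i * w.1 i - p.2 i * w.2 i)

theorem sqDiff_add_smul (p w : EuclideanSpace ℝ ι × EuclideanSpace ℝ ι) (t : ℝ) :
    sqDiff (p + t • w) = sqDiff p + t • sqDiffDeriv p w + t ^ 2 • sqDiff w := by
  ext i
  simp only [sqDiff, sqDiffDeriv, Prod.fst_add, Prod.snd_add, Prod.smul_fst, Prod.smul_snd,
    WithLp.ofLp_add, WithLp.ofLp_smul, Pi.add_apply, Pi.smul_apply, smul_eq_mul]
  ring

theorem sqDiffDeriv_add_smul (p w : EuclideanSpace ℝ ι × EuclideanSpace ℝ ι) (t : ℝ) :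
    sqDiffDeriv (p + t • w) w = sqDiffDeriv p w + (2 * t) • sqDiff w := by
  ext i
  simp only [sqDiff, sqDiffDeriv, Prod.fst_add, Prod.snd_add, Prod.smul_fst, Prod.smul_snd,
    WithLp.ofLp_add, WithLp.ofLp_smul, Pi.add_apply, Pi.smul_apply, smul_eq_mul]
  ring

section Coordinates

variable [DecidableEq ι] (p : EuclideanSpace ℝ ι × EuclideanSpace ℝ ι) (i : ι)

theorem sqDiffDeriv_single_fst :
    sqDiffDeriv p (EuclideanSpace.single i 1, 0) = (2 * p.1 i) • EuclideanSpace.single i 1 := by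
  ext j
  by_cases hj : j = i <;> simp [sqDiffDeriv, hj]

theorem sqDiffDeriv_single_snd :
    sqDiffDeriv p (0, EuclideanSpace.single i 1) = (-(2 * p.2 i)) • EuclideanSpace.single i 1 := by
  ext j
  by_cases hj : j = i <;> simp [sqDiffDeriv, hj]

theorem sqDiff_single_fst :
    sqDiff ((EuclideanSpace.single i 1, 0) : EuclideanSpace ℝ ι × EuclideanSpace ℝ ι) =
      EuclideanSpace.single i 1 := by
  ext j
  by_cases hj : j = i <;> simp [sqDiff, hj]

theorem sqDiff_single_snd :
    sqDiff ((0, EuclideanSpace.single i 1) : EuclideanSpace ℝ ι × EuclideanSpace ℝ ι) =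
      -EuclideanSpace.single i 1 := by
  ext j
  by_cases hj : j = i <;> simp [sqDiff, hj]

end Coordinates

theorem contDiff_sqDiff [Fintype ι] {k : WithTop ℕ∞} :
    ContDiff ℝ k (sqDiff : EuclideanSpace ℝ ι × EuclideanSpace ℝ ι → EuclideanSpace ℝ ι) := by
  unfold sqDiff
  fun_prop

variable [Fintype ι]

def hdpObjective (h : EuclideanSpace ℝ ι → ℝ) (μ : ℝ)
    (p : EuclideanSpace ℝ ι × EuclideanSpace ℝ ι) : ℝ :=
  h (sqDiff p) + μ * ∑ i, (p.1 i ^ 2 + p.2 i ^ 2)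

theorem sum_sq_add_sq_eq_norm_sq (a b : EuclideanSpace ℝ ι) :
    ∑ i, (a i ^ 2 + b i ^ 2) = ‖a‖ ^ 2 + ‖b‖ ^ 2 := by
  rw [EuclideanSpace.real_norm_sq_eq, EuclideanSpace.real_norm_sq_eq, Finset.sum_add_distrib]

theorem norm_add_smul_sq (a u : EuclideanSpace ℝ ι) (t : ℝ) :
    ‖a + t • u‖ ^ 2 = ‖a‖ ^ 2 + t * (2 * inner ℝ a u) + t ^ 2 * ‖u‖ ^ 2 := by
  rw [norm_add_sq_real, norm_smul, inner_smul_right, mul_pow, Real.norm_eq_abs, sq_abs]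
  ring

variable (h : EuclideanSpace ℝ ι → ℝ) (μ : ℝ)

theorem hdpObjective_add_smul (p w : EuclideanSpace ℝ ι × EuclideanSpace ℝ ι) (t : ℝ) :
    hdpObjective h μ (p + t • w) =
      h (sqDiff p + t • sqDiffDeriv p w + t ^ 2 • sqDiff w) +
        μ * ((‖p.1‖ ^ 2 + ‖p.2‖ ^ 2) + t * (2 * (inner ℝ p.1 w.1 + inner ℝ p.2 w.2)) +
          t ^ 2 * (‖w.1‖ ^ 2 + ‖w.2‖ ^ 2)) := by
  rw [hdpObjective, sqDiff_add_smul, sum_sq_add_sq_eq_norm_sq, Prod.fst_add, Prod.snd_add,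
    Prod.smul_fst, Prod.smul_snd, norm_add_smul_sq, norm_add_smul_sq]
  ring

theorem contDiff_hdpObjective (hh : ContDiff ℝ 2 h) : ContDiff ℝ 2 (hdpObjective h μ) := by
  unfold hdpObjective
  exact (hh.comp contDiff_sqDiff).add (by fun_prop)

theorem fderiv_hdpObjective_apply (hh : Differentiable ℝ h)
    (p w : EuclideanSpace ℝ ι × EuclideanSpace ℝ ι) :
    fderiv ℝ (hdpObjective h μ) p w = fderiv ℝ h (sqDiff p) (sqDiffDeriv p w) +
      2 * μ * (inner ℝ p.1 w.1 + inner ℝ p.2 w.2) := by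
  have hd : Differentiable ℝ (hdpObjective h μ) := by
    unfold hdpObjective
    exact (hh.comp (contDiff_sqDiff.differentiable one_ne_zero)).add (by fun_prop)
  rw [← (hd p).lineDeriv_eq_fderiv]
  refine HasLineDerivAt.lineDeriv ?_
  unfold HasLineDerivAt
  simp only [hdpObjective_add_smul]
  have hcurve := (hh (sqDiff p)).hasFDerivAt.comp_hasDerivAt_of_eq 0
    (hasDerivAt_add_smul_add_sq_smul (sqDiff p) (sqDiffDeriv p w) (sqDiff w)) (by simp)
  have hquad := (hasDerivAt_add_smul_add_sq_smul (‖p.1‖ ^ 2 + ‖p.2‖ ^ 2)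
    (2 * (inner ℝ p.1 w.1 + inner ℝ p.2 w.2)) (‖w.1‖ ^ 2 + ‖w.2‖ ^ 2)).const_mul μ
  exact (hcurve.fun_add hquad).congr_deriv (by ring)

theorem iteratedFDeriv_two_hdpObjective_apply (hh : ContDiff ℝ 2 h)
    (p w : EuclideanSpace ℝ ι × EuclideanSpace ℝ ι) :
    iteratedFDeriv ℝ 2 (hdpObjective h μ) p (fun _ => w) =
      fderiv ℝ (fderiv ℝ h) (sqDiff p) (sqDiffDeriv p w) (sqDiffDeriv p w) +
        2 * fderiv ℝ h (sqDiff p) (sqDiff w) + 2 * μ * (‖w.1‖ ^ 2 + ‖w.2‖ ^ 2) := by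
  have hd : Differentiable ℝ (fderiv ℝ h) :=
    (hh.fderiv_right (m := 1) le_rfl).differentiable one_ne_zero
  refine ((contDiff_hdpObjective h μ hh).hasLineDerivAt_fderiv_apply p w).unique ?_
  have hinner : ∀ (a u : EuclideanSpace ℝ ι) (t : ℝ),
      inner ℝ (a + t • u) u = inner ℝ a u + t * ‖u‖ ^ 2 := fun a u t => by
    rw [inner_add_left, real_inner_smul_left, real_inner_self_eq_norm_sq]
  unfold HasLineDerivAt
  simp only [fderiv_hdpObjective_apply h μ (hh.differentiable two_ne_zero), sqDiff_add_smul,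
    sqDiffDeriv_add_smul, Prod.fst_add, Prod.snd_add, Prod.smul_fst, Prod.smul_snd, hinner]
  have hgrad := (hd (sqDiff p)).hasFDerivAt.comp_hasDerivAt_of_eq 0
    (hasDerivAt_add_smul_add_sq_smul (sqDiff p) (sqDiffDeriv p w) (sqDiff w)) (by simp)
  have hdir : HasDerivAt (fun t : ℝ => sqDiffDeriv p w + (2 * t) • sqDiff w)
      ((2 : ℝ) • sqDiff w) 0 := by
    simpa using (((hasDerivAt_id' (0 : ℝ)).const_mul 2).smul_const (sqDiff w)).const_add
      (sqDiffDeriv p w)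
  have hlin : HasDerivAt (fun t : ℝ => 2 * μ * (inner ℝ p.1 w.1 + t * ‖w.1‖ ^ 2 +
      (inner ℝ p.2 w.2 + t * ‖w.2‖ ^ 2))) (2 * μ * (‖w.1‖ ^ 2 + ‖w.2‖ ^ 2)) 0 := by
    have h₁ := ((hasDerivAt_id' (0 : ℝ)).mul_const (‖w.1‖ ^ 2)).const_add (inner ℝ p.1 w.1)
    have h₂ := ((hasDerivAt_id' (0 : ℝ)).mul_const (‖w.2‖ ^ 2)).const_add (inner ℝ p.2 w.2)
    simpa using (h₁.fun_add h₂).const_mul (2 * μ)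
  exact ((hgrad.clm_apply hdir).fun_add hlin).congr_deriv (by simp)

variable [DecidableEq ι] (p : EuclideanSpace ℝ ι × EuclideanSpace ℝ ι) (i : ι)

theorem fderiv_hdpObjective_single_fst (hh : Differentiable ℝ h) :
    fderiv ℝ (hdpObjective h μ) p (EuclideanSpace.single i 1, 0) =
      2 * p.1 i * (fderiv ℝ h (sqDiff p) (EuclideanSpace.single i 1) + μ) := by
  rw [fderiv_hdpObjective_apply h μ hh, sqDiffDeriv_single_fst, map_smul,
    EuclideanSpace.inner_single_right]
  simp only [smul_eq_mul, Real.ringHom_apply, inner_zero_right]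
  ring

theorem fderiv_hdpObjective_single_snd (hh : Differentiable ℝ h) :
    fderiv ℝ (hdpObjective h μ) p (0, EuclideanSpace.single i 1) =
      2 * p.2 i * (μ - fderiv ℝ h (sqDiff p) (EuclideanSpace.single i 1)) := by
  rw [fderiv_hdpObjective_apply h μ hh, sqDiffDeriv_single_snd, map_smul,
    EuclideanSpace.inner_single_right]
  simp only [smul_eq_mul, Real.ringHom_apply, inner_zero_right]
  ring

theorem iteratedFDeriv_two_hdpObjective_single_fst (hh : ContDiff ℝ 2 h) (hp : p.1 i = 0) :
    iteratedFDeriv ℝ 2 (hdpObjective h μ) p (fun _ => (EuclideanSpace.single i 1, 0)) =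
      2 * (fderiv ℝ h (sqDiff p) (EuclideanSpace.single i 1) + μ) := by
  rw [iteratedFDeriv_two_hdpObjective_apply h μ hh, sqDiffDeriv_single_fst, sqDiff_single_fst, hp]
  simp only [mul_zero, zero_smul, map_zero, PiLp.norm_single, norm_one, norm_zero]
  ring

theorem iteratedFDeriv_two_hdpObjective_single_snd (hh : ContDiff ℝ 2 h) (hp : p.2 i = 0) :
    iteratedFDeriv ℝ 2 (hdpObjective h μ) p (fun _ => (0, EuclideanSpace.single i 1)) =
      2 * (μ - fderiv ℝ h (sqDiff p) (EuclideanSpace.single i 1)) := by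
  rw [iteratedFDeriv_two_hdpObjective_apply h μ hh, sqDiffDeriv_single_snd, sqDiff_single_snd, hp]
  simp only [mul_zero, neg_zero, zero_smul, map_zero, map_neg, PiLp.norm_single, norm_one,
    norm_zero]
  ring

end HDP

theorem abs_sq_sub_sq_le (r s : ℝ) : |r ^ 2 - s ^ 2| ≤ r ^ 2 + s ^ 2 :=
  abs_le.mpr ⟨by nlinarith [sq_nonneg r], by nlinarith [sq_nonneg s]⟩

theorem abs_sq_sub_sq_eq_iff (r s : ℝ) :
    |r ^ 2 - s ^ 2| = r ^ 2 + s ^ 2 ↔ min (r ^ 2) (s ^ 2) = 0 := by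
  rcases le_total (r ^ 2) (s ^ 2) with hle | hle
  · rw [min_eq_left hle, abs_of_nonpos (by linarith)]
    constructor <;> intro <;> nlinarith [sq_nonneg r]
  · rw [min_eq_right hle, abs_of_nonneg (by linarith)]
    constructor <;> intro <;> nlinarith [sq_nonneg s]

theorem exists_sq_sub_sq_eq (y : ℝ) : ∃ r s : ℝ, r ^ 2 - s ^ 2 = y ∧ r ^ 2 + s ^ 2 = |y| := by
  rcases le_total 0 y with hy | hy
  · exact ⟨√y, 0, by simp [Real.sq_sqrt hy], by simp [Real.sq_sqrt hy, abs_of_nonneg hy]⟩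
  · exact ⟨0, √(-y), by simp [Real.sq_sqrt (neg_nonneg.mpr hy)],
      by simp [Real.sq_sqrt (neg_nonneg.mpr hy), abs_of_nonpos hy]⟩

section Stationary

variable {a b g μ : ℝ}

theorem min_sq_eq_zero_of_stationary (hμ : 0 < μ) (ha : a * (g + μ) = 0) (hb : b * (μ - g) = 0) :
    min (a ^ 2) (b ^ 2) = 0 := by
  rcases mul_eq_zero.mp ha with ha | ha
  · simp [ha, sq_nonneg]
  · have : b = 0 := by
      rcases mul_eq_zero.mp hb with hb | hb
      · exact hb
      · linarith
    simp [this, sq_nonneg]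

theorem eq_neg_mul_sign_of_stationary (ha : a * (g + μ) = 0) (hb : b * (μ - g) = 0)
    (hx : a ^ 2 - b ^ 2 ≠ 0) : g = -(μ * SignType.sign (a ^ 2 - b ^ 2)) := by
  rcases lt_or_gt_of_ne hx with hneg | hpos
  · have hb0 : b ≠ 0 := by rintro rfl; nlinarith [sq_nonneg a]
    rw [sign_neg hneg, SignType.coe_neg_one]
    linarith [(mul_eq_zero.mp hb).resolve_left hb0]
  · have ha0 : a ≠ 0 := by rintro rfl; nlinarith [sq_nonneg b]
    rw [sign_pos hpos, SignType.coe_one]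
    linarith [(mul_eq_zero.mp ha).resolve_left ha0]

end Stationary

theorem eq_zero_of_min_sq_eq_zero {r s : ℝ} (hmin : min (r ^ 2) (s ^ 2) = 0)
    (hx : r ^ 2 - s ^ 2 = 0) : r = 0 ∧ s = 0 := by
  rcases min_choice (r ^ 2) (s ^ 2) with h | h <;> rw [h] at hmin <;>
    exact ⟨pow_eq_zero_iff two_ne_zero |>.mp (by linarith),
      pow_eq_zero_iff two_ne_zero |>.mp (by linarith)⟩

section HDPvsL1

variable {ι : Type*} [Fintype ι] {h : EuclideanSpace ℝ ι → ℝ} {μ : ℝ}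

theorem hdpObjective_sub_l1Objective (p : EuclideanSpace ℝ ι × EuclideanSpace ℝ ι) :
    hdpObjective h μ p - l1Objective h μ (sqDiff p) =
      μ * ∑ i, ((p.1 i ^ 2 + p.2 i ^ 2) - |p.1 i ^ 2 - p.2 i ^ 2|) := by
  simp only [hdpObjective, l1Objective, sqDiff, Finset.sum_sub_distrib]
  ring

theorem l1Objective_sqDiff_le_hdpObjective (hμ : 0 ≤ μ)
    (p : EuclideanSpace ℝ ι × EuclideanSpace ℝ ι) :
    l1Objective h μ (sqDiff p) ≤ hdpObjective h μ p := by
  have := hdpObjective_sub_l1Objective (h := h) (μ := μ) p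
  have : 0 ≤ μ * ∑ i, ((p.1 i ^ 2 + p.2 i ^ 2) - |p.1 i ^ 2 - p.2 i ^ 2|) :=
    mul_nonneg hμ (Finset.sum_nonneg fun i _ => sub_nonneg.mpr (abs_sq_sub_sq_le _ _))
  linarith

theorem hdpObjective_eq_l1Objective_iff (hμ : 0 < μ) (p : EuclideanSpace ℝ ι × EuclideanSpace ℝ ι) :
    hdpObjective h μ p = l1Objective h μ (sqDiff p) ↔ ∀ i, min (p.1 i ^ 2) (p.2 i ^ 2) = 0 := by
  rw [← sub_eq_zero, hdpObjective_sub_l1Objective, mul_eq_zero, or_iff_right hμ.ne',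
    Finset.sum_eq_zero_iff_of_nonneg fun i _ => sub_nonneg.mpr (abs_sq_sub_sq_le _ _)]
  simp only [Finset.mem_univ, true_implies, sub_eq_zero, eq_comm (a := _ + _), abs_sq_sub_sq_eq_iff]

theorem exists_hdpObjective_eq_l1Objective (y : EuclideanSpace ℝ ι) :
    ∃ p, sqDiff p = y ∧ hdpObjective h μ p = l1Objective h μ y := by
  choose r s hsub hadd using fun i => exists_sq_sub_sq_eq (y i)
  have hy : sqDiff (WithLp.toLp 2 r, WithLp.toLp 2 s) = y := by
    ext i
    exact hsub i
  refine ⟨(WithLp.toLp 2 r, WithLp.toLp 2 s), hy, ?_⟩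
  rw [hdpObjective, l1Objective, hy]
  simp [hadd]

theorem isMin_hdpObjective_iff (hμ : 0 < μ) (p : EuclideanSpace ℝ ι × EuclideanSpace ℝ ι) :
    (∀ q, hdpObjective h μ p ≤ hdpObjective h μ q) ↔
      (∀ y, l1Objective h μ (sqDiff p) ≤ l1Objective h μ y) ∧
        ∀ i, min (p.1 i ^ 2) (p.2 i ^ 2) = 0 := by
  have hle := l1Objective_sqDiff_le_hdpObjective (h := h) hμ.le
  constructor
  · intro hmin
    have hlift : ∀ y, hdpObjective h μ p ≤ l1Objective h μ y := fun y => by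
      obtain ⟨q, -, hq⟩ := exists_hdpObjective_eq_l1Objective (h := h) (μ := μ) y
      exact hq ▸ hmin q
    refine ⟨fun y => (hle p).trans (hlift y), (hdpObjective_eq_l1Objective_iff (h := h) hμ p).mp ?_⟩
    exact le_antisymm (hlift _) (hle p)
  · rintro ⟨hmin, hcomp⟩ q
    rw [(hdpObjective_eq_l1Objective_iff hμ p).mpr hcomp]
    exact (hmin _).trans (hle q)

variable [DecidableEq ι] {p : EuclideanSpace ℝ ι × EuclideanSpace ℝ ι}

theorem stationary_of_fderiv_hdpObjective_eq_zero (hh : Differentiable ℝ h)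
    (h0 : fderiv ℝ (hdpObjective h μ) p = 0) (i : ι) :
    p.1 i * (fderiv ℝ h (sqDiff p) (EuclideanSpace.single i 1) + μ) = 0 ∧
      p.2 i * (μ - fderiv ℝ h (sqDiff p) (EuclideanSpace.single i 1)) = 0 := by
  have h₁ := fderiv_hdpObjective_single_fst h μ p i hh
  have h₂ := fderiv_hdpObjective_single_snd h μ p i hh
  rw [h0, zero_apply] at h₁ h₂
  constructor <;> linarith

theorem isSignStationary_sqDiff_of_fderiv_eq_zero (hh : Differentiable ℝ h)
    (h0 : fderiv ℝ (hdpObjective h μ) p = 0) : IsSignStationary h μ (sqDiff p) := fun i hx =>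
  have hstat := stationary_of_fderiv_hdpObjective_eq_zero hh h0 i
  eq_neg_mul_sign_of_stationary hstat.1 hstat.2 hx

theorem isMin_l1Objective_of_fderiv_hdpObjective_eq_zero (hconv : ConvexOn ℝ univ h)
    (hh : Differentiable ℝ h) (hμ : 0 < μ) (h0 : fderiv ℝ (hdpObjective h μ) p = 0)
    (hbound : ∀ i, p.1 i = 0 → p.2 i = 0 →
      |fderiv ℝ h (sqDiff p) (EuclideanSpace.single i 1)| ≤ μ) :
    (∀ y, l1Objective h μ (sqDiff p) ≤ l1Objective h μ y) ∧
      ∀ i, min (p.1 i ^ 2) (p.2 i ^ 2) = 0 := by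
  have hcomp i := min_sq_eq_zero_of_stationary hμ
    (stationary_of_fderiv_hdpObjective_eq_zero hh h0 i).1
    (stationary_of_fderiv_hdpObjective_eq_zero hh h0 i).2
  refine ⟨l1Objective_le_of_isSignStationary hconv (hh _) hμ.le
    (isSignStationary_sqDiff_of_fderiv_eq_zero hh h0) fun i hx => ?_, hcomp⟩
  obtain ⟨ha, hb⟩ := eq_zero_of_min_sq_eq_zero (hcomp i) hx
  exact hbound i ha hb

theorem abs_fderiv_single_le_of_le_iteratedFDeriv_two (hh : ContDiff ℝ 2 h) {i : ι}
    (ha : p.1 i = 0) (hb : p.2 i = 0) {c : ℝ}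
    (hfst : c ≤ iteratedFDeriv ℝ 2 (hdpObjective h μ) p (fun _ => (EuclideanSpace.single i 1, 0)))
    (hsnd : c ≤ iteratedFDeriv ℝ 2 (hdpObjective h μ) p (fun _ => (0, EuclideanSpace.single i 1))) :
    |fderiv ℝ h (sqDiff p) (EuclideanSpace.single i 1)| ≤ μ - c / 2 := by
  rw [iteratedFDeriv_two_hdpObjective_single_fst h μ p i hh ha] at hfst
  rw [iteratedFDeriv_two_hdpObjective_single_snd h μ p i hh hb] at hsnd
  exact abs_le.mpr ⟨by linarith, by linarith⟩

end HDPvsL1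

theorem stmt9_general (n : ℕ)
    (h : EuclideanSpace ℝ (Fin n) → ℝ) (hh : ContDiff ℝ 2 h)
    (hconv : ConvexOn ℝ Set.univ h)
    (μ : ℝ) (hμ : 0 < μ)
    (f : EuclideanSpace ℝ (Fin n) → ℝ)
    (hf : f = fun x => h x + μ * ∑ i, |x i|)
    (F : EuclideanSpace ℝ (Fin n) × EuclideanSpace ℝ (Fin n) → ℝ)
    (hF : F = fun p =>
      h (WithLp.toLp 2 (fun i => p.1 i ^ 2 - p.2 i ^ 2)) + μ * ∑ i, (p.1 i ^ 2 + p.2 i ^ 2)) :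
    ∃ δ > (0 : ℝ), ∀ a b : EuclideanSpace ℝ (Fin n),
      (((fderiv ℝ F (a, b) = 0 ∧
          ∀ u v : EuclideanSpace ℝ (Fin n), (u, v) ≠ (0, 0) →
            -δ * (‖u‖ ^ 2 + ‖v‖ ^ 2) < iteratedFDeriv ℝ 2 F (a, b) (fun _ => (u, v))) ↔
        ((∀ x, f (WithLp.toLp 2 (fun i => a i ^ 2 - b i ^ 2)) ≤ f x) ∧
          ∀ i : Fin n, min (a i ^ 2) (b i ^ 2) = 0)) ∧
      (((∀ x, f (WithLp.toLp 2 (fun i => a i ^ 2 - b i ^ 2)) ≤ f x) ∧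
          ∀ i : Fin n, min (a i ^ 2) (b i ^ 2) = 0) ↔
        (∀ p, F (a, b) ≤ F p)) ∧
      ((∀ p, F (a, b) ≤ F p) ↔
        (fderiv ℝ F (a, b) = 0 ∧
          ∀ w : EuclideanSpace ℝ (Fin n) × EuclideanSpace ℝ (Fin n),
            0 ≤ iteratedFDeriv ℝ 2 F (a, b) (fun _ => w)))) := by
  change f = l1Objective h μ at hf
  change F = hdpObjective h μ at hF
  subst hf hF
  have hd := hh.differentiable two_ne_zero
  obtain ⟨δ, hδ, hgap⟩ := exists_pos_gap_isSignStationary hconv hd μ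
  refine ⟨δ, hδ, fun a b => ?_⟩
  have h23 := (isMin_hdpObjective_iff (h := h) hμ (a, b)).symm
  have h34 (hmin : ∀ q, hdpObjective h μ (a, b) ≤ hdpObjective h μ q) :=
    have hloc : IsLocalMin (hdpObjective h μ) (a, b) := Eventually.of_forall hmin
    And.intro hloc.fderiv_eq_zero (hloc.iteratedFDeriv_two_nonneg (contDiff_hdpObjective h μ hh))
  refine ⟨⟨fun ⟨h0, hQ⟩ => ?_, fun h2 => ?_⟩, h23, h34, fun ⟨h0, hQ⟩ => h23.mp ?_⟩
  · refine isMin_l1Objective_of_fderiv_hdpObjective_eq_zero hconv hd hμ h0 fun i ha hb => ?_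
    have hle := abs_fderiv_single_le_of_le_iteratedFDeriv_two (c := -δ) hh ha hb
      (by simpa using (hQ (EuclideanSpace.single i 1) 0 (by simp)).le)
      (by simpa using (hQ 0 (EuclideanSpace.single i 1) (by simp)).le)
    by_contra! hlt
    linarith [hgap _ (isSignStationary_sqDiff_of_fderiv_eq_zero hd h0) i hlt]
  · obtain ⟨h0, hQ⟩ := h34 (h23.mp h2)
    refine ⟨h0, fun u v huv => lt_of_lt_of_le ?_ (hQ (u, v))⟩
    have hpos : 0 < ‖u‖ ^ 2 + ‖v‖ ^ 2 := by
      rcases (by simpa [or_iff_not_imp_left] using huv : u ≠ 0 ∨ v ≠ 0) with hu | hv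
      · exact add_pos_of_pos_of_nonneg (pow_pos (norm_pos_iff.mpr hu) 2) (sq_nonneg _)
      · exact add_pos_of_nonneg_of_pos (sq_nonneg _) (pow_pos (norm_pos_iff.mpr hv) 2)
    exact mul_neg_of_neg_of_pos (neg_neg_of_pos hδ) hpos
  · refine isMin_l1Objective_of_fderiv_hdpObjective_eq_zero hconv hd hμ h0 fun i ha hb => ?_
    simpa using abs_fderiv_single_le_of_le_iteratedFDeriv_two hh ha hb (hQ _) (hQ _)

/-- **strict saddle property.** If `h` is convex, there exists `δ > 0`
such that for every `(a,b)`, the following are equivalent: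
(i) `∇F(a,b) = 0` and `λ_min(∇²F(a,b)) > −δ`;
(ii) `a² − b²` is a global minimizer of `f` and `min{aᵢ², bᵢ²} = 0` for all `i`;
(iii) `(a,b)` is a global minimizer of `F`;
(iv) `(a,b)` is a second-order stationary point of `F`. -/
theorem stmt9 (n : ℕ) (hn : 0 < n)
    (h : EuclideanSpace ℝ (Fin n) → ℝ) (hh : ContDiff ℝ 2 h)
    (hconv : ConvexOn ℝ Set.univ h)
    (μ : ℝ) (hμ : 0 < μ)
    (f : EuclideanSpace ℝ (Fin n) → ℝ)
    (hf : f = fun x => h x + μ * ∑ i, |x i|)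
    (F : EuclideanSpace ℝ (Fin n) × EuclideanSpace ℝ (Fin n) → ℝ)
    (hF : F = fun p =>
      h (WithLp.toLp 2 (fun i => p.1 i ^ 2 - p.2 i ^ 2)) + μ * ∑ i, (p.1 i ^ 2 + p.2 i ^ 2)) :
    ∃ δ > (0 : ℝ), ∀ a b : EuclideanSpace ℝ (Fin n),
      (((fderiv ℝ F (a, b) = 0 ∧
          ∀ u v : EuclideanSpace ℝ (Fin n), (u, v) ≠ (0, 0) →
            -δ * (‖u‖ ^ 2 + ‖v‖ ^ 2) < iteratedFDeriv ℝ 2 F (a, b) (fun _ => (u, v))) ↔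
        ((∀ x, f (WithLp.toLp 2 (fun i => a i ^ 2 - b i ^ 2)) ≤ f x) ∧
          ∀ i : Fin n, min (a i ^ 2) (b i ^ 2) = 0)) ∧
      (((∀ x, f (WithLp.toLp 2 (fun i => a i ^ 2 - b i ^ 2)) ≤ f x) ∧
          ∀ i : Fin n, min (a i ^ 2) (b i ^ 2) = 0) ↔
        (∀ p, F (a, b) ≤ F p)) ∧
      ((∀ p, F (a, b) ≤ F p) ↔
        (fderiv ℝ F (a, b) = 0 ∧
          ∀ w : EuclideanSpace ℝ (Fin n) × EuclideanSpace ℝ (Fin n),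
            0 ≤ iteratedFDeriv ℝ 2 F (a, b) (fun _ => w)))) :=
  stmt9_general n h hh hconv μ hμ f hf F hF
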